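/- arXiv:1803.01738 — 4 statements merged into one kernel-verified Lean document; each statement's English description precedes it below -/
import Mathlib

section
/- (Answer to question Q for a connected graph; existence form of Theorem 4.4.) Let S be a nonempty finite set, let G be a connected simple graph on S, and let μ be a probability distribution on S. Then there exist a probability space (Ω, 𝔽, P) and a stochastic process X = (X(t) : t ∈ ℕ) with values in S that is consistent with G and whose empirical distribution converges almost surely to μ: for every s ∈ S, (1/t)·Σ_{m=0}^{t−1} 1{X(m)=s} → μ(s) almost surely as t → ∞. -/
open MeasureTheory Filter

open List

section Aux
variable {S : Type*} [Fintype S] [DecidableEq S] [Nonempty S]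

noncomputable def Dw (μ : S → ℝ) (n : ℕ) (s : S) : ℕ := ⌊(n : ℝ) * μ s⌋₊

noncomputable def piece (μ : S → ℝ) (b1 b2 : S → List S) (n : ℕ) (s : S) : List S :=
  b1 s ++ (List.replicate (Dw μ n s) s ++ b2 s)

noncomputable def block (μ : S → ℝ) (b1 b2 : S → List S) (n : ℕ) : List S :=
  (Finset.univ : Finset S).toList.flatMap (piece μ b1 b2 n)

noncomputable def pref (μ : S → ℝ) (b1 b2 : S → List S) (N : ℕ) : List S :=
  (List.range N).flatMap (block μ b1 b2)

noncomputable def xseq (μ : S → ℝ) (b1 b2 : S → List S) (s0 : S) (t : ℕ) : S :=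
  (pref μ b1 b2 (t+1)).getD t s0

-- general: chain of flatMap of s0-to-s0 pieces
lemma chain'_flatMap {α β : Type*} (R : α → α → Prop) (s0 : α) (hR : R s0 s0)
    (f : β → List α) (l : List β)
    (h : ∀ b ∈ l, Chain' R (f b) ∧ (f b).head? = some s0 ∧ (f b).getLast? = some s0) :
    Chain' R (l.flatMap f) ∧
      (l = [] ∨ ((l.flatMap f).head? = some s0 ∧ (l.flatMap f).getLast? = some s0)) := by
  induction l with
  | nil => simp [Chain', List.isChain_nil]
  | cons b l ih =>
    obtain ⟨hc, hh, hl⟩ := h b List.mem_cons_self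
    have ih' := ih (fun b hb => h b (List.mem_cons_of_mem _ hb))
    have hfb : f b ≠ [] := by intro e; rw [e] at hh; simp at hh
    rw [List.flatMap_cons]
    constructor
    · rw [Chain', List.isChain_append]
      refine ⟨hc, ih'.1, ?_⟩
      intro x hx y hy
      rw [hl] at hx
      simp at hx
      subst hx
      rcases ih'.2 with h0 | ⟨hh2, _⟩
      · rw [h0] at hy; simp at hy
      · rw [hh2] at hy; simp at hy; subst hy; exact hR
    · right
      constructor
      · rw [List.head?_append]
        rw [hh]; rfl
      · rcases ih'.2 with h0 | ⟨_, hl2⟩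
        · subst h0; simpa using hl
        · have hne : l.flatMap f ≠ [] := by intro e; rw [e] at hl2; simp at hl2
          rw [List.getLast?_append_of_ne_nil _ hne, hl2]

lemma sum_map_range {M : Type*} [AddCommMonoid M] (g : ℕ → M) (N : ℕ) :
    ((List.range N).map g).sum = ∑ n ∈ Finset.range N, g n := by
  induction N with
  | zero => simp
  | succ n ih =>
      rw [List.range_succ, List.map_append, List.sum_append, Finset.sum_range_succ, ih]; simp

variable (μ : S → ℝ) (b1 b2 : S → List S) (s0 : S)

lemma piece_prop (R : S → S → Prop) (hR : ∀ a, R a a)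
    (h1 : ∀ s, Chain' R (b1 s) ∧ (b1 s).head? = some s0 ∧ (b1 s).getLast? = some s)
    (h2 : ∀ s, Chain' R (b2 s) ∧ (b2 s).head? = some s ∧ (b2 s).getLast? = some s0)
    (n : ℕ) (s : S) :
    Chain' R (piece μ b1 b2 n s) ∧ (piece μ b1 b2 n s).head? = some s0 ∧
      (piece μ b1 b2 n s).getLast? = some s0 := by
  obtain ⟨c1, hh1, hl1⟩ := h1 s
  obtain ⟨c2, hh2, hl2⟩ := h2 s
  have hb1ne : b1 s ≠ [] := by intro e; rw [e] at hh1; simp at hh1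
  have hb2ne : b2 s ≠ [] := by intro e; rw [e] at hh2; simp at hh2
  have hmidh : (List.replicate (Dw μ n s) s ++ b2 s).head? = some s := by
    cases h : Dw μ n s with
    | zero => simp [hh2]
    | succ d => simp [List.replicate_succ]
  refine ⟨?_, ?_, ?_⟩
  · rw [piece, Chain', List.isChain_append]
    refine ⟨c1, ?_, ?_⟩
    · rw [List.isChain_append]
      refine ⟨List.isChain_replicate_of_rel _ (hR s), c2, ?_⟩
      intro x hx y hy
      rw [List.getLast?_replicate] at hx
      rw [hh2] at hy
      simp at hy; subst hy
      rcases Nat.eq_zero_or_pos (Dw μ n s) with h | h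
      · simp [h] at hx
      · rw [if_neg (Nat.pos_iff_ne_zero.mp h)] at hx
        simp at hx; subst hx; exact hR s
    · intro x hx y hy
      rw [hl1] at hx; simp at hx; subst hx
      rw [hmidh] at hy; simp at hy; subst hy
      exact hR s
  · rw [piece, List.head?_append, hh1]; rfl
  · rw [piece, List.getLast?_append_of_ne_nil, List.getLast?_append_of_ne_nil _ hb2ne, hl2]
    simp [hb2ne]

lemma block_prop (R : S → S → Prop) (hR : ∀ a, R a a)
    (h1 : ∀ s, Chain' R (b1 s) ∧ (b1 s).head? = some s0 ∧ (b1 s).getLast? = some s)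
    (h2 : ∀ s, Chain' R (b2 s) ∧ (b2 s).head? = some s ∧ (b2 s).getLast? = some s0)
    (n : ℕ) :
    Chain' R (block μ b1 b2 n) ∧ (block μ b1 b2 n).head? = some s0 ∧
      (block μ b1 b2 n).getLast? = some s0 := by
  have huniv : (Finset.univ : Finset S).toList ≠ [] := by
    rw [Ne, Finset.toList_eq_nil]
    exact Finset.univ_nonempty.ne_empty
  have := chain'_flatMap R s0 (hR s0) (piece μ b1 b2 n) (Finset.univ : Finset S).toList
    (fun s _ => piece_prop μ b1 b2 s0 R hR h1 h2 n s)
  rcases this with ⟨hc, h | h⟩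
  · exact absurd h huniv
  · exact ⟨hc, h⟩

lemma pref_chain (R : S → S → Prop) (hR : ∀ a, R a a)
    (h1 : ∀ s, Chain' R (b1 s) ∧ (b1 s).head? = some s0 ∧ (b1 s).getLast? = some s)
    (h2 : ∀ s, Chain' R (b2 s) ∧ (b2 s).head? = some s ∧ (b2 s).getLast? = some s0)
    (N : ℕ) : Chain' R (pref μ b1 b2 N) :=
  (chain'_flatMap R s0 (hR s0) (block μ b1 b2) (List.range N)
    (fun n _ => block_prop μ b1 b2 s0 R hR h1 h2 n)).1

lemma pref_succ (N : ℕ) : pref μ b1 b2 (N+1) = pref μ b1 b2 N ++ block μ b1 b2 N := by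
  rw [pref, List.range_succ, List.flatMap_append, pref]; simp

lemma pref_prefix {N M : ℕ} (h : N ≤ M) : pref μ b1 b2 N <+: pref μ b1 b2 M := by
  induction M with
  | zero => rw [Nat.le_zero.mp h]
  | succ m ih =>
      rcases Nat.lt_or_ge N (m+1) with h' | h'
      · exact (ih (Nat.lt_succ_iff.mp h')).trans (by rw [pref_succ]; exact List.prefix_append _ _)
      · rw [Nat.le_antisymm h h']

noncomputable def Ks (s : S) : ℕ := ∑ s' : S, ((b1 s').count s + (b2 s').count s)

noncomputable def Cnt (s : S) (N : ℕ) : ℕ := ∑ n ∈ Finset.range N, (Ks b1 b2 s + Dw μ n s)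

lemma count_piece (n : ℕ) (s s' : S) :
    (piece μ b1 b2 n s').count s
      = ((b1 s').count s + (b2 s').count s) + (if s' = s then Dw μ n s' else 0) := by
  rw [piece, List.count_append, List.count_append, List.count_replicate]
  simp only [beq_iff_eq]
  omega

lemma count_block (n : ℕ) (s : S) :
    (block μ b1 b2 n).count s = Ks b1 b2 s + Dw μ n s := by
  rw [block, List.count_flatMap, Finset.sum_map_toList]
  simp only [Function.comp]
  rw [Finset.sum_congr rfl (fun s' _ => count_piece μ b1 b2 n s s')]
  rw [Finset.sum_add_distrib, Finset.sum_ite_eq' Finset.univ s (fun s' => Dw μ n s')]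
  simp [Ks]

lemma count_pref (N : ℕ) (s : S) :
    (pref μ b1 b2 N).count s = Cnt μ b1 b2 s N := by
  rw [pref, List.count_flatMap, sum_map_range, Cnt]
  exact Finset.sum_congr rfl (fun n _ => count_block μ b1 b2 n s)

lemma length_eq_sum_count (l : List S) : l.length = ∑ s : S, l.count s := by
  induction l with
  | nil => simp
  | cons a l ih =>
      simp only [List.count_cons, beq_iff_eq, List.length_cons, ih, Finset.sum_add_distrib]
      rw [Finset.sum_ite_eq Finset.univ a (fun _ => 1)]
      simp

lemma length_pref (N : ℕ) :
    (pref μ b1 b2 N).length = ∑ n ∈ Finset.range N, ∑ s : S, (Ks b1 b2 s + Dw μ n s) := by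
  rw [length_eq_sum_count, Finset.sum_comm]
  exact Finset.sum_congr rfl (fun s _ => by rw [count_pref, Cnt])

lemma length_pref_ge (hKs : ∀ s, 1 ≤ Ks b1 b2 s) (N : ℕ) : N ≤ (pref μ b1 b2 N).length := by
  rw [length_pref]
  calc N = ∑ n ∈ Finset.range N, 1 := by simp
  _ ≤ _ := Finset.sum_le_sum (fun n _ => by
      calc 1 ≤ Ks b1 b2 (Classical.arbitrary S) + Dw μ n (Classical.arbitrary S) :=
        le_add_right (hKs _)
      _ ≤ _ := Finset.single_le_sum (f := fun s => Ks b1 b2 s + Dw μ n s)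
          (fun _ _ => Nat.zero_le _) (Finset.mem_univ _))

lemma length_pref_lt (hKs : ∀ s, 1 ≤ Ks b1 b2 s) (N : ℕ) :
    (pref μ b1 b2 N).length < (pref μ b1 b2 (N+1)).length := by
  rw [length_pref, length_pref, Finset.sum_range_succ]
  have : 1 ≤ ∑ s : S, (Ks b1 b2 s + Dw μ N s) :=
    le_trans (le_add_right (hKs (Classical.arbitrary S)))
      (Finset.single_le_sum (f := fun s => Ks b1 b2 s + Dw μ N s)
        (fun _ _ => Nat.zero_le _) (Finset.mem_univ _))
  omega

lemma xseq_eq {N t : ℕ} (hKs : ∀ s, 1 ≤ Ks b1 b2 s) (ht : t < (pref μ b1 b2 N).length) :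
    xseq μ b1 b2 s0 t = (pref μ b1 b2 N).getD t s0 := by
  have ht1 : t < (pref μ b1 b2 (t+1)).length := lt_of_lt_of_le (Nat.lt_succ_self t)
    (length_pref_ge μ b1 b2 hKs (t+1))
  have hp1 : pref μ b1 b2 (t+1) <+: pref μ b1 b2 (max N (t+1)) :=
    pref_prefix μ b1 b2 (le_max_right _ _)
  have hp2 : pref μ b1 b2 N <+: pref μ b1 b2 (max N (t+1)) :=
    pref_prefix μ b1 b2 (le_max_left _ _)
  rw [xseq, List.getD_eq_getElem _ _ ht1, List.getD_eq_getElem _ _ ht,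
    hp1.getElem ht1, hp2.getElem ht]

lemma xseq_chain (R : S → S → Prop) (hR : ∀ a, R a a) (hKs : ∀ s, 1 ≤ Ks b1 b2 s)
    (h1 : ∀ s, Chain' R (b1 s) ∧ (b1 s).head? = some s0 ∧ (b1 s).getLast? = some s)
    (h2 : ∀ s, Chain' R (b2 s) ∧ (b2 s).head? = some s ∧ (b2 s).getLast? = some s0)
    (t : ℕ) : R (xseq μ b1 b2 s0 t) (xseq μ b1 b2 s0 (t+1)) := by
  have hlen : t + 2 ≤ (pref μ b1 b2 (t+2)).length := length_pref_ge μ b1 b2 hKs (t+2)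
  have hc := pref_chain μ b1 b2 s0 R hR h1 h2 (t+2)
  rw [Chain', List.isChain_iff_getElem] at hc
  have ht : t < (pref μ b1 b2 (t+2)).length - 1 := by omega
  have := hc t (by omega)
  rw [xseq_eq μ b1 b2 s0 hKs (show t < (pref μ b1 b2 (t+2)).length by omega),
    xseq_eq μ b1 b2 s0 hKs (show t+1 < (pref μ b1 b2 (t+2)).length by omega)]
  rw [List.getD_eq_getElem _ _ (show t < (pref μ b1 b2 (t+2)).length by omega),
    List.getD_eq_getElem _ _ (show t+1 < (pref μ b1 b2 (t+2)).length by omega)]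
  exact this

lemma empirical_eq (hKs : ∀ s, 1 ≤ Ks b1 b2 s) (s : S) {N t : ℕ}
    (ht : t ≤ (pref μ b1 b2 N).length) :
    (∑ m ∈ Finset.range t, if xseq μ b1 b2 s0 m = s then (1:ℝ) else 0)
      = (((pref μ b1 b2 N).take t).count s : ℕ) := by
  induction t with
  | zero => simp
  | succ t ih =>
      have ht' : t < (pref μ b1 b2 N).length := ht
      rw [Finset.sum_range_succ, ih (le_of_lt ht'),
        List.take_succ, List.getElem?_eq_getElem ht', List.count_append]
      have hx : xseq μ b1 b2 s0 t = (pref μ b1 b2 N)[t] := by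
        rw [xseq_eq μ b1 b2 s0 hKs ht', List.getD_eq_getElem _ _ ht']
      rw [hx]
      simp only [Option.toList_some, List.count_singleton, beq_iff_eq]
      push_cast
      by_cases h : (pref μ b1 b2 N)[t] = s <;> simp [h]

lemma empirical_full (hKs : ∀ s, 1 ≤ Ks b1 b2 s) (s : S) (N : ℕ) :
    (∑ m ∈ Finset.range ((pref μ b1 b2 N).length), if xseq μ b1 b2 s0 m = s then (1:ℝ) else 0)
      = (Cnt μ b1 b2 s N : ℕ) := by
  rw [empirical_eq μ b1 b2 s0 hKs s (le_refl _), List.take_length, count_pref]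

lemma sum_id_real (N : ℕ) : ∑ n ∈ Finset.range N, (n:ℝ) = N*(N-1)/2 := by
  induction N with
  | zero => simp
  | succ n ih => rw [Finset.sum_range_succ, ih]; push_cast; ring

lemma lim_inv_nat : Tendsto (fun N : ℕ => (N:ℝ)/(N:ℝ)^2) atTop (nhds 0) := by
  refine tendsto_one_div_atTop_nhds_zero_nat.congr' ?_
  filter_upwards [eventually_ge_atTop 1] with N hN
  have : (N:ℝ) ≠ 0 := Nat.cast_ne_zero.mpr (by omega)
  field_simp

lemma lim_inv_sq : Tendsto (fun N : ℕ => 1/(N:ℝ)^2) atTop (nhds 0) := by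
  have h2 := (tendsto_one_div_atTop_nhds_zero_nat (𝕜 := ℝ)).mul (tendsto_one_div_atTop_nhds_zero_nat (𝕜 := ℝ))
  rw [mul_zero] at h2
  refine h2.congr (fun N => ?_)
  rw [div_mul_div_comm, one_mul, sq]

lemma lim_gauss : Tendsto (fun N : ℕ => ((N:ℝ)*((N:ℝ)-1)/2)/(N:ℝ)^2) atTop (nhds (1/2)) := by
  have h : Tendsto (fun N : ℕ => (1 - 1/(N:ℝ))/2) atTop (nhds ((1-0)/2)) :=
    (tendsto_const_nhds.sub tendsto_one_div_atTop_nhds_zero_nat).div_const 2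
  rw [sub_zero] at h
  refine h.congr' ?_
  filter_upwards [eventually_ge_atTop 1] with N hN
  have : (N:ℝ) ≠ 0 := Nat.cast_ne_zero.mpr (by omega)
  field_simp

lemma lim_Dw_sum (hμ0 : ∀ s, 0 ≤ μ s) (s : S) :
    Tendsto (fun N : ℕ => (∑ n ∈ Finset.range N, (Dw μ n s : ℝ))/(N:ℝ)^2) atTop
      (nhds (μ s / 2)) := by
  have hg : Tendsto (fun N : ℕ => μ s * (((N:ℝ)*((N:ℝ)-1)/2)/(N:ℝ)^2) - (N:ℝ)/(N:ℝ)^2)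
      atTop (nhds (μ s * (1/2) - 0)) :=
    (lim_gauss.const_mul (μ s)).sub lim_inv_nat
  have hh : Tendsto (fun N : ℕ => μ s * (((N:ℝ)*((N:ℝ)-1)/2)/(N:ℝ)^2)) atTop
      (nhds (μ s * (1/2))) := lim_gauss.const_mul (μ s)
  rw [show μ s * (1/2) - 0 = μ s / 2 by ring] at hg
  rw [show μ s * (1/2) = μ s / 2 by ring] at hh
  refine tendsto_of_tendsto_of_tendsto_of_le_of_le' hg hh ?_ ?_
  · filter_upwards [eventually_ge_atTop 1] with N hN
    have hN0 : (0:ℝ) < (N:ℝ)^2 := by positivity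
    have hsum : μ s * ((N:ℝ)*((N:ℝ)-1)/2) - N ≤ ∑ n ∈ Finset.range N, (Dw μ n s : ℝ) := by
      have : ∀ n ∈ Finset.range N, (n:ℝ) * μ s - 1 ≤ (Dw μ n s : ℝ) :=
        fun n _ => le_of_lt (Nat.sub_one_lt_floor _)
      calc μ s * ((N:ℝ)*((N:ℝ)-1)/2) - N = ∑ n ∈ Finset.range N, ((n:ℝ) * μ s - 1) := by
            rw [Finset.sum_sub_distrib, ← Finset.sum_mul, sum_id_real]
            simp [mul_comm]
      _ ≤ _ := Finset.sum_le_sum this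
    calc μ s * (((N:ℝ)*((N:ℝ)-1)/2)/(N:ℝ)^2) - (N:ℝ)/(N:ℝ)^2
        = (μ s * ((N:ℝ)*((N:ℝ)-1)/2) - N)/(N:ℝ)^2 := by ring
    _ ≤ _ := by rw [div_le_div_iff_of_pos_right hN0]; exact hsum
  · filter_upwards [eventually_ge_atTop 1] with N hN
    have hN0 : (0:ℝ) < (N:ℝ)^2 := by positivity
    have hsum : ∑ n ∈ Finset.range N, (Dw μ n s : ℝ) ≤ μ s * ((N:ℝ)*((N:ℝ)-1)/2) := by
      have : ∀ n ∈ Finset.range N, (Dw μ n s : ℝ) ≤ (n:ℝ) * μ s :=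
        fun n _ => Nat.floor_le (mul_nonneg (Nat.cast_nonneg n) (hμ0 s))
      calc ∑ n ∈ Finset.range N, (Dw μ n s : ℝ) ≤ ∑ n ∈ Finset.range N, (n:ℝ) * μ s :=
            Finset.sum_le_sum this
      _ = _ := by rw [← Finset.sum_mul, sum_id_real]; ring
    calc (∑ n ∈ Finset.range N, (Dw μ n s : ℝ))/(N:ℝ)^2
        ≤ (μ s * ((N:ℝ)*((N:ℝ)-1)/2))/(N:ℝ)^2 := by
          rw [div_le_div_iff_of_pos_right hN0]; exact hsum
    _ = _ := by ring

lemma cnt_cast (s : S) (N : ℕ) :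
    (Cnt μ b1 b2 s N : ℝ) = N * (Ks b1 b2 s : ℝ) + ∑ n ∈ Finset.range N, (Dw μ n s : ℝ) := by
  rw [Cnt]
  push_cast
  rw [Finset.sum_add_distrib, Finset.sum_const, Finset.card_range]
  simp [nsmul_eq_mul]

lemma lim_cnt (hμ0 : ∀ s, 0 ≤ μ s) (s : S) :
    Tendsto (fun N : ℕ => (Cnt μ b1 b2 s N : ℝ)/(N:ℝ)^2) atTop (nhds (μ s / 2)) := by
  have h : Tendsto (fun N : ℕ => (Ks b1 b2 s : ℝ) * ((N:ℝ)/(N:ℝ)^2)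
      + (∑ n ∈ Finset.range N, (Dw μ n s : ℝ))/(N:ℝ)^2) atTop
      (nhds ((Ks b1 b2 s : ℝ) * 0 + μ s / 2)) :=
    (lim_inv_nat.const_mul _).add (lim_Dw_sum μ hμ0 s)
  rw [mul_zero, zero_add] at h
  refine h.congr (fun N => ?_)
  rw [cnt_cast, add_div]
  ring

lemma lim_extra (hμ0 : ∀ s, 0 ≤ μ s) (hμ1 : ∑ s, μ s = 1) (s : S) :
    Tendsto (fun N : ℕ => ((Ks b1 b2 s + Dw μ N s : ℕ) : ℝ)/(N:ℝ)^2) atTop (nhds 0) := by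
  have hμs1 : μ s ≤ 1 := hμ1 ▸ Finset.single_le_sum (fun i _ => hμ0 i) (Finset.mem_univ s)
  have hup : Tendsto (fun N : ℕ => (Ks b1 b2 s : ℝ) * (1/(N:ℝ)^2) + (N:ℝ)/(N:ℝ)^2) atTop
      (nhds ((Ks b1 b2 s : ℝ) * 0 + 0)) := (lim_inv_sq.const_mul _).add lim_inv_nat
  rw [mul_zero, zero_add] at hup
  refine tendsto_of_tendsto_of_tendsto_of_le_of_le' tendsto_const_nhds hup ?_ ?_
  · filter_upwards with N
    positivity
  · filter_upwards [eventually_ge_atTop 1] with N hN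
    have hN0 : (0:ℝ) < (N:ℝ)^2 := by positivity
    have hDw : (Dw μ N s : ℝ) ≤ (N:ℝ) :=
      le_trans (Nat.floor_le (mul_nonneg (Nat.cast_nonneg N) (hμ0 s)))
        (by nlinarith [Nat.cast_nonneg (α := ℝ) N])
    calc ((Ks b1 b2 s + Dw μ N s : ℕ) : ℝ)/(N:ℝ)^2
        ≤ ((Ks b1 b2 s : ℝ) + (N:ℝ))/(N:ℝ)^2 := by
          rw [div_le_div_iff_of_pos_right hN0]; push_cast; linarith
    _ = _ := by ring

lemma lim_cnt' (hμ0 : ∀ s, 0 ≤ μ s) (hμ1 : ∑ s, μ s = 1) (s : S) :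
    Tendsto (fun N : ℕ => (Cnt μ b1 b2 s (N+1) : ℝ)/(N:ℝ)^2) atTop (nhds (μ s / 2)) := by
  have h := (lim_cnt μ b1 b2 hμ0 s).add (lim_extra μ b1 b2 hμ0 hμ1 s)
  rw [add_zero] at h
  refine h.congr (fun N => ?_)
  rw [← add_div]
  congr 1
  rw [show Cnt μ b1 b2 s (N+1) = Cnt μ b1 b2 s N + (Ks b1 b2 s + Dw μ N s) from
    Finset.sum_range_succ _ _]
  push_cast
  ring

lemma lim_T (hμ0 : ∀ s, 0 ≤ μ s) (hμ1 : ∑ s, μ s = 1) :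
    Tendsto (fun N : ℕ => ((pref μ b1 b2 N).length : ℝ)/(N:ℝ)^2) atTop (nhds (1/2)) := by
  have h := tendsto_finset_sum (f := fun s (N:ℕ) => (Cnt μ b1 b2 s N : ℝ)/(N:ℝ)^2)
    (a := fun s => μ s / 2) Finset.univ (fun s _ => lim_cnt μ b1 b2 hμ0 s)
  rw [show ∑ s : S, μ s / 2 = 1/2 by rw [← Finset.sum_div, hμ1]] at h
  refine h.congr (fun N => ?_)
  rw [← Finset.sum_div]
  congr 1
  rw [length_eq_sum_count]
  push_cast
  exact Finset.sum_congr rfl (fun s _ => by rw [count_pref])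

lemma lim_T' (hμ0 : ∀ s, 0 ≤ μ s) (hμ1 : ∑ s, μ s = 1) :
    Tendsto (fun N : ℕ => ((pref μ b1 b2 (N+1)).length : ℝ)/(N:ℝ)^2) atTop (nhds (1/2)) := by
  have hex := tendsto_finset_sum (f := fun s (N:ℕ) => ((Ks b1 b2 s + Dw μ N s : ℕ) : ℝ)/(N:ℝ)^2)
    (a := fun _ => 0) Finset.univ (fun s _ => lim_extra μ b1 b2 hμ0 hμ1 s)
  rw [Finset.sum_const, smul_zero] at hex
  have h := (lim_T μ b1 b2 hμ0 hμ1).add hex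
  rw [add_zero] at h
  refine h.congr (fun N => ?_)
  rw [← Finset.sum_div, ← add_div]
  congr 1
  rw [length_pref, length_pref, Finset.sum_range_succ]
  push_cast
  ring

lemma empirical_tendsto (hμ0 : ∀ s, 0 ≤ μ s) (hμ1 : ∑ s, μ s = 1)
    (hKs : ∀ s, 1 ≤ Ks b1 b2 s) (s : S) :
    Tendsto (fun t : ℕ =>
        (∑ m ∈ Finset.range t, if xseq μ b1 b2 s0 m = s then (1:ℝ) else 0) / t)
      atTop (nhds (μ s)) := by
  set T : ℕ → ℕ := fun N => (pref μ b1 b2 N).length with hT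
  set E : ℕ → ℝ := fun t => ∑ m ∈ Finset.range t, if xseq μ b1 b2 s0 m = s then (1:ℝ) else 0
    with hE
  have hT0 : T 0 = 0 := by simp [hT, pref]
  have hTge : ∀ N, N ≤ T N := fun N => length_pref_ge μ b1 b2 hKs N
  have hEmono : ∀ {t t' : ℕ}, t ≤ t' → E t ≤ E t' := by
    intro t t' h
    refine Finset.sum_le_sum_of_subset_of_nonneg (Finset.range_subset_range.mpr h) ?_
    intro i _ _
    by_cases hc : xseq μ b1 b2 s0 i = s <;> simp [hc]
  have hEnonneg : ∀ t, 0 ≤ E t := fun t => Finset.sum_nonneg (fun i _ => by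
    by_cases hc : xseq μ b1 b2 s0 i = s <;> simp [hc])
  have hET : ∀ N, E (T N) = (Cnt μ b1 b2 s N : ℝ) := by
    intro N
    simp only [hE, hT]
    exact empirical_full μ b1 b2 s0 hKs s N
  set Nt : ℕ → ℕ := fun t => Nat.findGreatest (fun N => T N ≤ t) t with hNt
  have fact1 : ∀ t, T (Nt t) ≤ t := by
    intro t
    exact Nat.findGreatest_spec (P := fun N => T N ≤ t) (Nat.zero_le t)
      (show T 0 ≤ t from hT0 ▸ Nat.zero_le t)
  have fact2 : ∀ t, t < T (Nt t + 1) := by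
    intro t
    by_cases h : Nt t + 1 ≤ t
    · by_contra h'
      push_neg at h'
      exact Nat.findGreatest_is_greatest (Nat.lt_succ_self _) h h'
    · push_neg at h
      have h1 : Nt t ≤ t := Nat.findGreatest_le t
      have h2 : Nt t = t := by omega
      calc t < t + 1 := Nat.lt_succ_self t
      _ ≤ T (t+1) := hTge _
      _ = T (Nt t + 1) := by rw [h2]
  have fact3 : Tendsto Nt atTop atTop := by
    rw [tendsto_atTop_atTop]
    intro b
    refine ⟨max b (T b), fun t ht => ?_⟩
    exact Nat.le_findGreatest (le_trans (le_max_left _ _) ht) (le_trans (le_max_right _ _) ht)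
  have div_div_lem : ∀ (a b c : ℝ), c ≠ 0 → (a/c)/(b/c) = a/b := by
    intro a b c hc
    rcases eq_or_ne b 0 with rfl | hb
    · simp
    · field_simp
  have hglo : Tendsto (fun N : ℕ => (Cnt μ b1 b2 s N : ℝ)/(T (N+1) : ℝ)) atTop
      (nhds (μ s)) := by
    have h := (lim_cnt μ b1 b2 hμ0 s).div (lim_T' μ b1 b2 hμ0 hμ1)
      (by norm_num : (1:ℝ)/2 ≠ 0)
    rw [show (μ s / 2)/((1:ℝ)/2) = μ s by field_simp] at h
    refine h.congr' ?_
    filter_upwards [eventually_ge_atTop 1] with N hN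
    simp only [Pi.div_apply, hT]
    rw [div_div_lem _ _ _ (by positivity : ((N:ℝ)^2) ≠ 0)]
  have hghi : Tendsto (fun N : ℕ => (Cnt μ b1 b2 s (N+1) : ℝ)/(T N : ℝ)) atTop
      (nhds (μ s)) := by
    have h := (lim_cnt' μ b1 b2 hμ0 hμ1 s).div (lim_T μ b1 b2 hμ0 hμ1)
      (by norm_num : (1:ℝ)/2 ≠ 0)
    rw [show (μ s / 2)/((1:ℝ)/2) = μ s by field_simp] at h
    refine h.congr' ?_
    filter_upwards [eventually_ge_atTop 1] with N hN
    simp only [Pi.div_apply, hT]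
    rw [div_div_lem _ _ _ (by positivity : ((N:ℝ)^2) ≠ 0)]
  refine tendsto_of_tendsto_of_tendsto_of_le_of_le' (hglo.comp fact3) (hghi.comp fact3) ?_ ?_
  · filter_upwards [eventually_ge_atTop (max 1 (T 1))] with t ht
    have ht1 : 1 ≤ t := le_trans (le_max_left _ _) ht
    have htT1 : T 1 ≤ t := le_trans (le_max_right _ _) ht
    have hN1 : 1 ≤ Nt t := Nat.le_findGreatest ht1 htT1
    refine div_le_div₀ (hEnonneg t) ?_ (by exact_mod_cast ht1) ?_
    · rw [← hET]
      exact hEmono (fact1 t)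
    · exact_mod_cast le_of_lt (fact2 t)
  · filter_upwards [eventually_ge_atTop (max 1 (T 1))] with t ht
    have ht1 : 1 ≤ t := le_trans (le_max_left _ _) ht
    have htT1 : T 1 ≤ t := le_trans (le_max_right _ _) ht
    have hN1 : 1 ≤ Nt t := Nat.le_findGreatest ht1 htT1
    have hTNpos : 1 ≤ T (Nt t) := le_trans hN1 (hTge _)
    refine div_le_div₀ (by positivity) ?_ (by exact_mod_cast hTNpos) ?_
    · rw [← hET]
      exact hEmono (le_of_lt (fact2 t))
    · exact_mod_cast fact1 t

theorem abstract_main (hμ0 : ∀ s, 0 ≤ μ s) (hμ1 : ∑ s, μ s = 1)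
    (R : S → S → Prop) (hR : ∀ a, R a a)
    (h1 : ∀ s, Chain' R (b1 s) ∧ (b1 s).head? = some s0 ∧ (b1 s).getLast? = some s)
    (h2 : ∀ s, Chain' R (b2 s) ∧ (b2 s).head? = some s ∧ (b2 s).getLast? = some s0) :
    ∃ x : ℕ → S, (∀ t, R (x t) (x (t+1))) ∧
      ∀ s, Tendsto (fun t : ℕ =>
        (∑ m ∈ Finset.range t, if x m = s then (1:ℝ) else 0) / t) atTop (nhds (μ s)) := by
  have hKs : ∀ s, 1 ≤ Ks b1 b2 s := by
    intro s
    have hlast := (h1 s).2.2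
    have hne : b1 s ≠ [] := by intro e; rw [e] at hlast; simp at hlast
    have hval : (b1 s).getLast hne = s := by
      rw [List.getLast?_eq_getLast hne] at hlast
      simpa using hlast
    have hmem : s ∈ b1 s := by
      have h' := List.getLast_mem hne
      rwa [hval] at h'
    have h1c : 1 ≤ (b1 s).count s := List.count_pos_iff.mpr hmem
    calc 1 ≤ (b1 s).count s + (b2 s).count s := le_add_right h1c
    _ ≤ _ := Finset.single_le_sum (f := fun s' => (b1 s').count s + (b2 s').count s)
        (fun _ _ => Nat.zero_le _) (Finset.mem_univ s)
  exact ⟨xseq μ b1 b2 s0, fun t => xseq_chain μ b1 b2 s0 R hR hKs h1 h2 t,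
    fun s => empirical_tendsto μ b1 b2 s0 hμ0 hμ1 hKs s⟩

end Aux

/-- answer to question Q for a connected graph: for any connected
simple graph `G` on a nonempty finite set `S` and any probability distribution `μ`
on `S`, there is a stochastic process with values in `S`, consistent with `G`,
whose empirical distribution converges almost surely to `μ`. -/
theorem stmt_10 {S : Type*} [Fintype S] [Nonempty S] [DecidableEq S]
    (G : SimpleGraph S) (hG : G.Connected)
    (μ : S → ℝ) (hμ0 : ∀ s, 0 ≤ μ s) (hμ1 : (∑ s, μ s) = 1) :
    ∃ (Ω : Type) (mΩ : MeasurableSpace Ω) (P : Measure Ω),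
      IsProbabilityMeasure P ∧
      ∃ X : ℕ → Ω → S,
        (∀ t, @Measurable Ω S mΩ ⊤ (X t)) ∧
        (∀ t : ℕ, ∀ᵐ ω ∂P, X (t + 1) ω = X t ω ∨ G.Adj (X t ω) (X (t + 1) ω)) ∧
        (∀ s : S, ∀ᵐ ω ∂P,
          Tendsto (fun t : ℕ =>
              (∑ m ∈ Finset.range t, if X m ω = s then (1 : ℝ) else 0) / t)
            atTop (nhds (μ s))) := by
  classical
  obtain ⟨s0⟩ := (inferInstance : Nonempty S)
  have hpre := hG.preconnected
  have hsupp : ∀ {u v : S} (w : G.Walk u v),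
      Chain' (fun a b => a = b ∨ G.Adj a b) w.support ∧ w.support.head? = some u ∧
        w.support.getLast? = some v := by
    intro u v w
    refine ⟨(w.isChain_adj_support).imp (fun a b h => Or.inr h), ?_, ?_⟩
    · rw [w.support_eq_cons]; rfl
    · rw [List.getLast?_eq_getLast w.support_ne_nil, SimpleGraph.Walk.getLast_support]
  obtain ⟨x, hchain, hconv⟩ := abstract_main μ
    (fun s => ((hpre s0 s).some).support) (fun s => ((hpre s s0).some).support) s0
    hμ0 hμ1 (fun a b => a = b ∨ G.Adj a b) (fun a => Or.inl rfl)
    (fun s => hsupp _) (fun s => hsupp _)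
  refine ⟨Unit, ⊤, @Measure.dirac Unit ⊤ (), by exact Measure.dirac.isProbabilityMeasure,
    fun t _ => x t, fun t => measurable_const, fun t => ?_, fun s => ?_⟩
  · refine Filter.Eventually.of_forall (fun ω => ?_)
    rcases hchain t with h | h
    · exact Or.inl h.symm
    · exact Or.inr h
  · exact Filter.Eventually.of_forall (fun ω => hconv s)
end

section
/- (Theorem 4.7(b), case of support meeting two components.) Let S be a finite set, G a simple graph on S, and μ a probability distribution on S. Suppose there exist s', s'' in the support of μ (i.e. μ(s') > 0 and μ(s'') > 0) that lie in different connected components of G, i.e. there is no walk in G from s' to s''. Then no stochastic process consistent with G has empirical distribution converging almost surely to μ: for every probability space and every S-valued process X = (X(t) : t ∈ ℕ) consistent with G, it is not the case that for every s ∈ S, (1/t)·Σ_{m=0}^{t−1} 1{X(m)=s} → μ(s) almost surely. -/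
open MeasureTheory Filter

private lemma visit_of_tendsto {S : Type*} [DecidableEq S] (Y : ℕ → S) (s : S) (c : ℝ)
    (hc : 0 < c)
    (h : Tendsto (fun t : ℕ =>
        (∑ m ∈ Finset.range t, if Y m = s then (1 : ℝ) else 0) / t) atTop (nhds c)) :
    ∃ t, Y t = s := by
  by_contra hno
  push_neg at hno
  have heq : (fun t : ℕ =>
      (∑ m ∈ Finset.range t, if Y m = s then (1 : ℝ) else 0) / t) = fun _ => 0 := by
    funext t
    have : (∑ m ∈ Finset.range t, if Y m = s then (1 : ℝ) else 0) = 0 := by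
      apply Finset.sum_eq_zero
      intro m _
      simp [hno m]
    simp [this]
  rw [heq] at h
  have := tendsto_nhds_unique h tendsto_const_nhds
  linarith

/-- Theorem 4.7(b), support meeting two components: if the support
of `μ` contains two points lying in different connected components of `G`, then no
stochastic process consistent with `G` has empirical distribution converging
almost surely to `μ`. -/
theorem stmt_13 {S : Type*} [Fintype S] [DecidableEq S]
    (G : SimpleGraph S)
    (μ : S → ℝ) (hμ0 : ∀ s, 0 ≤ μ s) (hμ1 : (∑ s, μ s) = 1)
    (s' s'' : S) (hs' : 0 < μ s') (hs'' : 0 < μ s'')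
    (hreach : ¬ G.Reachable s' s'') :
    ∀ (Ω : Type*) (mΩ : MeasurableSpace Ω) (P : Measure Ω),
      IsProbabilityMeasure P →
      ∀ X : ℕ → Ω → S,
        (∀ t : ℕ, ∀ᵐ ω ∂P, X (t + 1) ω = X t ω ∨ G.Adj (X t ω) (X (t + 1) ω)) →
        ¬ (∀ s : S, ∀ᵐ ω ∂P,
            Tendsto (fun t : ℕ =>
                (∑ m ∈ Finset.range t, if X m ω = s then (1 : ℝ) else 0) / t)
              atTop (nhds (μ s))) := by
  intro Ω mΩ P hP X hcons h
  have hconsAll : ∀ᵐ ω ∂P, ∀ t : ℕ,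
      X (t + 1) ω = X t ω ∨ G.Adj (X t ω) (X (t + 1) ω) := ae_all_iff.mpr hcons
  have hgood := hconsAll.and ((h s').and (h s''))
  haveI : (MeasureTheory.ae P).NeBot := ae_neBot.mpr (IsProbabilityMeasure.ne_zero P)
  obtain ⟨ω, hωc, hω', hω''⟩ := hgood.exists
  have hreach0 : ∀ t, G.Reachable (X 0 ω) (X t ω) := by
    intro t
    induction t with
    | zero => exact SimpleGraph.Reachable.refl _
    | succ n ih =>
        rcases hωc n with hEq | hAdj
        · rw [hEq]; exact ih
        · exact ih.trans hAdj.reachable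
  obtain ⟨t1, ht1⟩ := visit_of_tendsto (fun t => X t ω) s' (μ s') hs' hω'
  obtain ⟨t2, ht2⟩ := visit_of_tendsto (fun t => X t ω) s'' (μ s'') hs'' hω''
  exact hreach ((ht1 ▸ hreach0 t1).symm.trans (ht2 ▸ hreach0 t2))
end

section
/- (Theorem 4.7(a), existence form.) Let S be a finite set, G a simple graph on S, and μ a probability distribution on S whose support supp(μ) = {s : μ(s) > 0} is nonempty and such that the induced subgraph G[supp(μ)] is connected. Then there exist a probability space and an S-valued stochastic process X = (X(t) : t ∈ ℕ) consistent with G, taking values in supp(μ) almost surely at every time, whose empirical distribution converges almost surely to μ: for every s ∈ S, (1/t)·Σ_{m=0}^{t−1} 1{X(m)=s} → μ(s) almost surely as t → ∞. -/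
open MeasureTheory Filter

set_option linter.unusedSectionVars false
namespace Stmt14Aux

variable {S : Type*} [DecidableEq S]

lemma flatMap_range_succ (f : ℕ → List S) (n : ℕ) :
    (List.range (n+1)).flatMap f = (List.range n).flatMap f ++ f n := by
  simp [List.range_succ]

lemma length_flatMap_range (f : ℕ → List S) (n : ℕ) :
    ((List.range n).flatMap f).length = ∑ i ∈ Finset.range n, (f i).length := by
  induction n with
  | zero => simp
  | succ n ih => rw [flatMap_range_succ, List.length_append, ih, Finset.sum_range_succ]

lemma count_flatMap_range (s : S) (f : ℕ → List S) (n : ℕ) :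
    ((List.range n).flatMap f).count s = ∑ i ∈ Finset.range n, (f i).count s := by
  induction n with
  | zero => simp
  | succ n ih => rw [flatMap_range_succ, List.count_append, ih, Finset.sum_range_succ]

lemma prefix_flatMap_range (f : ℕ → List S) {m n : ℕ} (h : m ≤ n) :
    (List.range m).flatMap f <+: (List.range n).flatMap f := by
  induction n with
  | zero => simp_all
  | succ n ih =>
    rcases Nat.lt_or_ge m (n+1) with h' | h'
    · exact (ih (Nat.lt_succ_iff.mp h')).trans (by rw [flatMap_range_succ]; exact ⟨f n, rfl⟩)
    · have : m = n+1 := le_antisymm h h'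
      subst this; exact List.prefix_rfl

lemma mem_flatMap_range {a : S} (f : ℕ → List S) (n : ℕ)
    (h : a ∈ (List.range n).flatMap f) : ∃ i < n, a ∈ f i := by
  simp only [List.mem_flatMap, List.mem_range] at h
  tauto

lemma chain'_flatMap_range (Rel : S → S → Prop) (f : ℕ → List S) (a b : ℕ → S)
    (h1 : ∀ i, List.Chain' Rel (f i))
    (hhead : ∀ i, (f i).head? = some (a i))
    (hlast : ∀ i, (f i).getLast? = some (b i))
    (hlink : ∀ i, Rel (b i) (a (i+1))) (n : ℕ) :
    List.Chain' Rel ((List.range n).flatMap f) ∧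
      (∀ m, n = m + 1 → ((List.range n).flatMap f).getLast? = some (b m)) ∧
      (0 < n → ((List.range n).flatMap f).head? = some (a 0)) := by
  induction n with
  | zero => simp [List.Chain']
  | succ n ih =>
    obtain ⟨ihc, ihl, ihh⟩ := ih
    rw [flatMap_range_succ]
    refine ⟨?_, ?_, ?_⟩
    · unfold List.Chain'; rw [List.isChain_append]
      refine ⟨ihc, h1 n, ?_⟩
      intro x hx y hy
      rcases Nat.eq_zero_or_pos n with h0 | h0
      · subst h0; simp at hx
      · obtain ⟨m, rfl⟩ := Nat.exists_eq_succ_of_ne_zero h0.ne'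
        rw [ihl m rfl] at hx
        rw [hhead (m+1)] at hy
        simp only [Option.mem_def, Option.some.injEq] at hx hy
        subst hx; subst hy; exact hlink m
    · intro m hm
      have : m = n := by omega
      subst this
      rw [List.getLast?_append, hlast _]
      rfl
    · intro _
      rcases Nat.eq_zero_or_pos n with h0 | h0
      · subst h0; simp [hhead 0]
      · rw [List.head?_append, ihh h0]; rfl
section Defs

variable (μ : S → ℝ) (v : ℕ → S) (g : ℕ → ℕ → S) (D k : ℕ)

noncomputable def stayN (r i : ℕ) : ℕ :=
  ⌊((r:ℝ)+1)^2 * μ (v i)⌋₊ - ⌊(r:ℝ)^2 * μ (v i)⌋₊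

def tripL (i : ℕ) : List S := (List.range (D+1)).map (g i)

noncomputable def segL (r i : ℕ) : List S :=
  List.replicate (stayN μ v r i) (v i) ++ tripL g D i

noncomputable def roundL (r : ℕ) : List S := (List.range k).flatMap (segL μ v g D r)

noncomputable def prefL (R : ℕ) : List S := (List.range R).flatMap (roundL μ v g D k)

noncomputable def xseq (d : S) (t : ℕ) : S := (prefL μ v g D k (t+1)).getD t d

end Defs

section Lemmas

variable {μ : S → ℝ} {v : ℕ → S} {g : ℕ → ℕ → S} {D k : ℕ} {Rel : S → S → Prop}

lemma head?_tripL (hg0 : ∀ i, g i 0 = v i) (i : ℕ) :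
    (tripL g D i).head? = some (v i) := by
  rw [tripL, List.range_succ_eq_map]
  simp [hg0 i]

lemma getLast?_tripL (hgD : ∀ i, g i D = v (i+1)) (i : ℕ) :
    (tripL g D i).getLast? = some (v (i+1)) := by
  rw [tripL, List.range_succ, List.map_append]
  simp [hgD i]

lemma head?_segL (hg0 : ∀ i, g i 0 = v i) (r i : ℕ) :
    (segL μ v g D r i).head? = some (v i) := by
  rw [segL]
  rcases Nat.eq_zero_or_pos (stayN μ v r i) with h | h
  · rw [h]; simpa using head?_tripL hg0 i
  · obtain ⟨m, hm⟩ := Nat.exists_eq_succ_of_ne_zero h.ne'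
    rw [hm, List.replicate_succ]
    rfl

lemma getLast?_segL (hgD : ∀ i, g i D = v (i+1)) (r i : ℕ) :
    (segL μ v g D r i).getLast? = some (v (i+1)) := by
  rw [segL, List.getLast?_append, getLast?_tripL hgD]
  rfl

lemma chain'_replicate' (hrefl : ∀ a : S, Rel a a) (n : ℕ) (a : S) :
    List.Chain' Rel (List.replicate n a) := by
  induction n with
  | zero => simp [List.Chain']
  | succ n ih =>
    rw [List.replicate_succ]
    cases n with
    | zero => simp [List.Chain']
    | succ m => exact List.IsChain.cons_cons (by simpa [List.replicate_succ] using hrefl a) ih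

lemma chain'_tripL (hstep : ∀ i n, Rel (g i n) (g i (n+1))) (i : ℕ) :
    List.Chain' Rel (tripL g D i) := by
  unfold List.Chain'; rw [tripL, List.isChain_map]
  rw [List.isChain_range_succ]
  intro m _
  exact hstep i m

lemma chain'_segL (hrefl : ∀ a : S, Rel a a) (hg0 : ∀ i, g i 0 = v i)
    (hstep : ∀ i n, Rel (g i n) (g i (n+1))) (r i : ℕ) :
    List.Chain' Rel (segL μ v g D r i) := by
  unfold List.Chain'; rw [segL, List.isChain_append]
  refine ⟨chain'_replicate' hrefl _ _, chain'_tripL hstep i, ?_⟩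
  intro x hx y hy
  rw [head?_tripL hg0] at hy
  have hx' : x = v i := by
    rcases Nat.eq_zero_or_pos (stayN μ v r i) with h | h
    · rw [h] at hx; simp at hx
    · obtain ⟨m, hm⟩ := Nat.exists_eq_succ_of_ne_zero h.ne'
      rw [hm] at hx
      have := List.mem_of_mem_getLast? hx
      simpa using (List.eq_of_mem_replicate this)
  simp only [Option.mem_def, Option.some.injEq] at hy
  subst hx'; subst hy; exact hrefl _

lemma roundL_props (hrefl : ∀ a : S, Rel a a) (hg0 : ∀ i, g i 0 = v i)
    (hgD : ∀ i, g i D = v (i+1)) (hstep : ∀ i n, Rel (g i n) (g i (n+1)))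
    (hk : 0 < k) (hvk : v k = v 0) (r : ℕ) :
    List.Chain' Rel (roundL μ v g D k r) ∧
      (roundL μ v g D k r).getLast? = some (v 0) ∧
      (roundL μ v g D k r).head? = some (v 0) := by
  have H := chain'_flatMap_range Rel (segL μ v g D r) v (fun i => v (i+1))
    (chain'_segL hrefl hg0 hstep r) (head?_segL hg0 r) (getLast?_segL hgD r)
    (fun i => hrefl _) k
  obtain ⟨hc, hl, hh⟩ := H
  obtain ⟨m, hm⟩ := Nat.exists_eq_succ_of_ne_zero hk.ne'
  refine ⟨hc, ?_, hh hk⟩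
  rw [roundL, hl m hm]
  rw [show m + 1 = k from hm.symm, hvk]

lemma chain'_prefL (hrefl : ∀ a : S, Rel a a) (hg0 : ∀ i, g i 0 = v i)
    (hgD : ∀ i, g i D = v (i+1)) (hstep : ∀ i n, Rel (g i n) (g i (n+1)))
    (hk : 0 < k) (hvk : v k = v 0) (R : ℕ) :
    List.Chain' Rel (prefL μ v g D k R) :=
  (chain'_flatMap_range Rel (roundL μ v g D k) (fun _ => v 0) (fun _ => v 0)
    (fun r => (roundL_props hrefl hg0 hgD hstep hk hvk r).1)
    (fun r => (roundL_props hrefl hg0 hgD hstep hk hvk r).2.2)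
    (fun r => (roundL_props hrefl hg0 hgD hstep hk hvk r).2.1)
    (fun _ => hrefl _) R).1

lemma length_segL (r i : ℕ) : (segL μ v g D r i).length = stayN μ v r i + (D+1) := by
  simp [segL, tripL]

lemma length_roundL (r : ℕ) :
    (roundL μ v g D k r).length = ∑ i ∈ Finset.range k, (stayN μ v r i + (D+1)) := by
  rw [roundL, length_flatMap_range]
  exact Finset.sum_congr rfl fun i _ => length_segL r i

lemma length_prefL (R : ℕ) :
    (prefL μ v g D k R).length = ∑ r ∈ Finset.range R, (roundL μ v g D k r).length := by
  rw [prefL, length_flatMap_range]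

lemma le_length_roundL (hk : 0 < k) (r : ℕ) : 1 ≤ (roundL μ v g D k r).length := by
  rw [length_roundL]
  calc 1 ≤ k := hk
  _ = ∑ i ∈ Finset.range k, 1 := by simp
  _ ≤ _ := Finset.sum_le_sum fun i _ => by omega

lemma le_length_prefL (hk : 0 < k) (R : ℕ) : R ≤ (prefL μ v g D k R).length := by
  rw [length_prefL]
  calc R = ∑ r ∈ Finset.range R, 1 := by simp
  _ ≤ _ := Finset.sum_le_sum fun r _ => le_length_roundL hk r

lemma count_segL (s : S) (r i : ℕ) :
    (segL μ v g D r i).count s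
      = (if v i = s then stayN μ v r i else 0) + (tripL g D i).count s := by
  rw [segL, List.count_append, List.count_replicate]
  simp [beq_iff_eq]

lemma count_roundL (s : S) (r : ℕ) :
    (roundL μ v g D k r).count s
      = ∑ i ∈ Finset.range k,
          ((if v i = s then stayN μ v r i else 0) + (tripL g D i).count s) := by
  rw [roundL, count_flatMap_range]
  exact Finset.sum_congr rfl fun i _ => count_segL s r i

lemma count_prefL (s : S) (R : ℕ) :
    (prefL μ v g D k R).count s = ∑ r ∈ Finset.range R, (roundL μ v g D k r).count s := by
  rw [prefL, count_flatMap_range]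

lemma sum_stayN (R i : ℕ) (hμ0 : 0 ≤ μ (v i)) :
    ∑ r ∈ Finset.range R, stayN μ v r i = ⌊(R:ℝ)^2 * μ (v i)⌋₊ := by
  have hmono : Monotone (fun r : ℕ => ⌊(r:ℝ)^2 * μ (v i)⌋₊) := by
    intro a b hab
    exact Nat.floor_mono (mul_le_mul_of_nonneg_right
      (pow_le_pow_left₀ (by positivity) (by exact_mod_cast hab) 2) hμ0)
  have : ∀ r : ℕ, stayN μ v r i
      = (fun r : ℕ => ⌊(r:ℝ)^2 * μ (v i)⌋₊) (r+1) - (fun r : ℕ => ⌊(r:ℝ)^2 * μ (v i)⌋₊) r := by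
    intro r
    rw [stayN]
    push_cast
    ring_nf
  rw [Finset.sum_congr rfl fun r _ => this r, Finset.sum_range_tsub hmono R]
  simp

lemma mem_prefL (hvpos : ∀ i, 0 < μ (v i)) (hgpos : ∀ i n, 0 < μ (g i n))
    {a : S} {R : ℕ} (h : a ∈ prefL μ v g D k R) : 0 < μ a := by
  obtain ⟨r, _, hr⟩ := mem_flatMap_range _ _ h
  obtain ⟨i, _, hi⟩ := mem_flatMap_range _ _ hr
  rw [segL, List.mem_append] at hi
  rcases hi with hi | hi
  · rw [List.eq_of_mem_replicate hi]; exact hvpos i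
  · obtain ⟨n, _, rfl⟩ := List.mem_map.mp hi
    exact hgpos i n

end Lemmas

section Xseq

variable {S : Type*} [DecidableEq S]
variable {μ : S → ℝ} {v : ℕ → S} {g : ℕ → ℕ → S} {D k : ℕ} {Rel : S → S → Prop}

lemma getD_eq_of_prefix {l₁ l₂ : List S} (h : l₁ <+: l₂) {t : ℕ} (ht : t < l₁.length) (d : S) :
    l₁.getD t d = l₂.getD t d := by
  rw [List.getD_eq_getElem l₁ d ht, List.getD_eq_getElem l₂ d (ht.trans_le h.length_le),
    h.getElem ht]

lemma sum_ite_getD (l : List S) (d s : S) :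
    ∑ m ∈ Finset.range l.length, (if l.getD m d = s then (1:ℕ) else 0) = l.count s := by
  induction l with
  | nil => simp
  | cons a tl ih =>
    rw [List.length_cons, Finset.sum_range_succ']
    simp only [List.getD_cons_succ, List.getD_cons_zero, ih, List.count_cons, beq_iff_eq]

lemma sum_getD (l : List S) (f : S → ℝ) (d : S) :
    ∑ i ∈ Finset.range l.length, f (l.getD i d) = (l.map f).sum := by
  induction l with
  | nil => simp
  | cons a tl ih =>
    rw [List.length_cons, Finset.sum_range_succ']
    simp only [List.getD_cons_succ, List.getD_cons_zero, ih, List.map_cons, List.sum_cons]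
    ring

lemma xseq_eq (hk : 0 < k) {d : S} {R t : ℕ} (ht : t < (prefL μ v g D k R).length) :
    xseq μ v g D k d t = (prefL μ v g D k R).getD t d := by
  have h1 : t < (prefL μ v g D k (t+1)).length :=
    lt_of_lt_of_le (Nat.lt_succ_self t) (le_length_prefL hk (t+1))
  rcases le_total (t+1) R with h | h
  · exact getD_eq_of_prefix (prefix_flatMap_range _ h) h1 d
  · exact (getD_eq_of_prefix (prefix_flatMap_range _ h) ht d).symm

lemma xseq_pos (hk : 0 < k) (hvpos : ∀ i, 0 < μ (v i)) (hgpos : ∀ i n, 0 < μ (g i n))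
    (d : S) (t : ℕ) : 0 < μ (xseq μ v g D k d t) := by
  have h1 : t < (prefL μ v g D k (t+1)).length :=
    lt_of_lt_of_le (Nat.lt_succ_self t) (le_length_prefL hk (t+1))
  rw [xseq, List.getD_eq_getElem _ _ h1]
  exact mem_prefL hvpos hgpos (List.getElem_mem _)

lemma xseq_step (hrefl : ∀ a : S, Rel a a) (hg0 : ∀ i, g i 0 = v i)
    (hgD : ∀ i, g i D = v (i+1)) (hstep : ∀ i n, Rel (g i n) (g i (n+1)))
    (hk : 0 < k) (hvk : v k = v 0) (d : S) (t : ℕ) :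
    Rel (xseq μ v g D k d t) (xseq μ v g D k d (t+1)) := by
  have hc := chain'_prefL (μ := μ) hrefl hg0 hgD hstep hk hvk (t+2)
  have h2 : t + 1 < (prefL μ v g D k (t+2)).length :=
    lt_of_lt_of_le (by omega) (le_length_prefL hk (t+2))
  have h1 : t < (prefL μ v g D k (t+2)).length := by omega
  rw [xseq_eq hk h1, xseq_eq hk h2, List.getD_eq_getElem _ _ h1, List.getD_eq_getElem _ _ h2]
  have := List.isChain_iff_getElem.mp hc t (by omega)
  simpa using this

end Xseq

section Analysis

variable {S : Type*} [DecidableEq S]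

noncomputable def cntN (μ : S → ℝ) (v : ℕ → S) (g : ℕ → ℕ → S) (D k : ℕ) (d s : S)
    (t : ℕ) : ℕ :=
  ∑ m ∈ Finset.range t, if xseq μ v g D k d m = s then (1:ℕ) else 0

variable {μ : S → ℝ} {v : ℕ → S} {g : ℕ → ℕ → S} {D k : ℕ}

lemma cntN_mono (d s : S) : Monotone (cntN μ v g D k d s) := by
  intro a b hab
  exact Finset.sum_le_sum_of_subset (Finset.range_subset_range.mpr hab)

lemma cntN_tlen (hk : 0 < k) (d s : S) (R : ℕ) :
    cntN μ v g D k d s (prefL μ v g D k R).length = (prefL μ v g D k R).count s := by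
  rw [cntN, ← sum_ite_getD (prefL μ v g D k R) d s]
  exact Finset.sum_congr rfl fun m hm => by
    rw [xseq_eq hk (Finset.mem_range.mp hm)]

lemma final_bound (μs C ε r k E EE a tt : ℝ)
    (hμs0 : 0 < μs) (hμs1 : μs ≤ 1) (hk1 : 1 ≤ k) (hE0 : 0 ≤ E) (hEE0 : 0 ≤ EE)
    (hC : C = E + EE + k + 3) (hε : 0 < ε)
    (hrk : k + 2 ≤ r)
    (hrC : 2*C + 1 + ε*k ≤ ε*r)
    (e1 : r^2*μs - 1 ≤ a)
    (e2 : a ≤ (r+1)^2*μs + (r+1)*E)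
    (e3 : r^2 - k ≤ tt)
    (e4 : tt + 1 ≤ (r+1)^2 + (r+1)*EE) :
    |a/tt - μs| < ε := by
  have hr3 : 3 ≤ r := by linarith
  have hC0 : 0 < C := by rw [hC]; linarith
  have htpos : (0:ℝ) < tt := by
    nlinarith [mul_le_mul_of_nonneg_left hrk (show (0:ℝ) ≤ r by linarith),
      mul_nonneg (show (0:ℝ) ≤ k by linarith) (show (0:ℝ) ≤ r - 1 by linarith)]
  have hub : a - μs * tt ≤ C * (r+1) := by
    have h9 : μs * (r^2 - k) ≤ μs * tt := mul_le_mul_of_nonneg_left e3 hμs0.le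
    have hexp : (r+1)^2 * μs - μs * (r^2 - k) = μs * (2*r+1+k) := by ring
    have h10 : μs * (2*r+1+k) ≤ 1 * (2*r+1+k) :=
      mul_le_mul_of_nonneg_right hμs1 (by linarith)
    have hCb : (2*r+1+k) + (r+1)*E ≤ C*(r+1) := by
      rw [hC]
      nlinarith [mul_nonneg hEE0 (show (0:ℝ) ≤ r+1 by linarith),
        mul_nonneg (show (0:ℝ) ≤ k by linarith) (show (0:ℝ) ≤ r by linarith)]
    linarith
  have hlb : μs * tt - a ≤ C * (r+1) := by
    have h9 : μs * tt ≤ μs * ((r+1)^2 + (r+1)*EE) :=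
      mul_le_mul_of_nonneg_left (by linarith) hμs0.le
    have hexp : μs * ((r+1)^2 + (r+1)*EE) - r^2 * μs
        = μs * (2*r+1) + μs * ((r+1)*EE) := by ring
    have h11 : μs * (2*r+1) ≤ 1 * (2*r+1) := mul_le_mul_of_nonneg_right hμs1 (by linarith)
    have h12 : μs * ((r+1)*EE) ≤ 1 * ((r+1)*EE) :=
      mul_le_mul_of_nonneg_right hμs1 (mul_nonneg (by linarith) hEE0)
    have hCb : (2*r+1) + (r+1)*EE + 1 ≤ C*(r+1) := by
      rw [hC]
      nlinarith [mul_nonneg hE0 (show (0:ℝ) ≤ r by linarith),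
        mul_nonneg hEE0 (show (0:ℝ) ≤ r by linarith),
        mul_nonneg (show (0:ℝ) ≤ k by linarith) (show (0:ℝ) ≤ r by linarith)]
    linarith
  have habs : |a - μs * tt| ≤ C * (r+1) := abs_sub_le_iff.mpr ⟨hub, hlb⟩
  have hCe : C * (r+1) + 1 ≤ ε * tt := by
    have h10 : ε * (r^2 - k) ≤ ε * tt := mul_le_mul_of_nonneg_left e3 hε.le
    nlinarith [mul_le_mul_of_nonneg_right hrC (show (0:ℝ) ≤ r by linarith),
      mul_nonneg (mul_nonneg hε.le (show (0:ℝ) ≤ k by linarith))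
        (show (0:ℝ) ≤ r - 1 by linarith),
      mul_nonneg hC0.le (show (0:ℝ) ≤ r - 1 by linarith)]
  have hrwr : (a / tt - μs) = (a - μs * tt) / tt := by field_simp
  rw [hrwr, abs_div, abs_of_pos htpos, div_lt_iff₀ htpos]
  calc |a - μs * tt| ≤ C * (r+1) := habs
    _ < C * (r+1) + 1 := by linarith
    _ ≤ ε * tt := hCe

lemma tendsto_xseq (hμ0 : ∀ s', 0 ≤ μ s') (hk : 0 < k)
    (hvpos : ∀ i, 0 < μ (v i)) (hgpos : ∀ i n, 0 < μ (g i n))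
    (hsum : ∑ i ∈ Finset.range k, μ (v i) = 1)
    (hinj : ∀ i < k, ∀ j < k, v i = v j → i = j)
    (d : S) (s : S) (hcover : 0 < μ s → ∃ i < k, v i = s) :
    Filter.Tendsto (fun t : ℕ =>
        (∑ m ∈ Finset.range t, if xseq μ v g D k d m = s then (1:ℝ) else 0) / t)
      Filter.atTop (nhds (μ s)) := by
  classical
  have hcast : ∀ t : ℕ, (∑ m ∈ Finset.range t, if xseq μ v g D k d m = s then (1:ℝ) else 0)
      = ((cntN μ v g D k d s t : ℕ) : ℝ) := by
    intro t
    simp only [cntN]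
    push_cast
    exact Finset.sum_congr rfl fun m _ => by split <;> simp
  by_cases hs : 0 < μ s
  swap
  · have hs0 : μ s = 0 := le_antisymm (not_lt.mp hs) (hμ0 s)
    have hz : ∀ t : ℕ, (∑ m ∈ Finset.range t, if xseq μ v g D k d m = s then (1:ℝ) else 0) = 0 := by
      intro t
      refine Finset.sum_eq_zero fun m _ => ?_
      rw [if_neg]
      intro h
      have := xseq_pos (D := D) hk hvpos hgpos d m
      rw [h, hs0] at this
      exact lt_irrefl _ this
    rw [hs0]
    simp only [hz, zero_div]
    exact tendsto_const_nhds
  obtain ⟨idx, hidxk, hidxv⟩ := hcover hs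
  -- notation
  set T : ℕ → ℕ := fun R => (prefL μ v g D k R).length with hT
  set A : ℕ → ℕ := fun R => (prefL μ v g D k R).count s with hA
  set E : ℕ := ∑ i ∈ Finset.range k, (tripL g D i).count s with hE
  have hT0 : T 0 = 0 := by simp [hT, prefL]
  have hTR : ∀ R, R ≤ T R := le_length_prefL hk
  -- exact count and length formulas
  have hAeq : ∀ R, A R = ⌊(R:ℝ)^2 * μ s⌋₊ + R * E := by
    intro R
    rw [hA]
    simp only
    rw [count_prefL]
    have h1 : ∀ r : ℕ, (roundL μ v g D k r).count s = stayN μ v r idx + E := by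
      intro r
      rw [count_roundL, Finset.sum_add_distrib, hE]
      congr 1
      rw [Finset.sum_eq_single_of_mem idx (Finset.mem_range.mpr hidxk)]
      · rw [if_pos hidxv]
      · intro i hi hne
        rw [if_neg]
        intro h
        exact hne (hinj i (Finset.mem_range.mp hi) idx hidxk (h.trans hidxv.symm))
    rw [Finset.sum_congr rfl fun r _ => h1 r, Finset.sum_add_distrib,
      sum_stayN R idx (hμ0 _), hidxv, Finset.sum_const, Finset.card_range, smul_eq_mul]
  have hTeq : ∀ R, T R = (∑ i ∈ Finset.range k, ⌊(R:ℝ)^2 * μ (v i)⌋₊) + R * (k * (D+1)) := by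
    intro R
    rw [hT]
    simp only
    rw [length_prefL, Finset.sum_congr rfl (fun r _ => length_roundL r), Finset.sum_comm]
    have h1 : ∀ i : ℕ, ∑ r ∈ Finset.range R, (stayN μ v r i + (D+1))
        = ⌊(R:ℝ)^2 * μ (v i)⌋₊ + R*(D+1) := by
      intro i
      rw [Finset.sum_add_distrib, sum_stayN R i (hμ0 _), Finset.sum_const, Finset.card_range,
        smul_eq_mul]
    rw [Finset.sum_congr rfl fun i _ => h1 i, Finset.sum_add_distrib, Finset.sum_const,
      Finset.card_range, smul_eq_mul]
    ring
  have hμs1 : μ s ≤ 1 := by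
    rw [← hsum, ← hidxv]
    exact Finset.single_le_sum (fun i _ => hμ0 _) (Finset.mem_range.mpr hidxk)
  -- real bounds
  have hAub : ∀ R : ℕ, (A R : ℝ) ≤ (R:ℝ)^2 * μ s + R * E := by
    intro R
    rw [hAeq R]
    push_cast
    have h := Nat.floor_le (a := (R:ℝ)^2 * μ s) (mul_nonneg (by positivity) (hμ0 s))
    linarith
  have hAlb : ∀ R : ℕ, (R:ℝ)^2 * μ s - 1 ≤ (A R : ℝ) := by
    intro R
    rw [hAeq R]
    push_cast
    have h := Nat.lt_floor_add_one ((R:ℝ)^2 * μ s)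
    have h2 : (0:ℝ) ≤ (R:ℝ) * E := by positivity
    linarith
  have hTub : ∀ R : ℕ, (T R : ℝ) ≤ (R:ℝ)^2 + R * (k*(D+1)) := by
    intro R
    rw [hTeq R]
    push_cast
    have h2 : (∑ i ∈ Finset.range k, ((⌊(R:ℝ)^2 * μ (v i)⌋₊ : ℕ) : ℝ))
        ≤ ∑ i ∈ Finset.range k, (R:ℝ)^2 * μ (v i) :=
      Finset.sum_le_sum fun i _ => Nat.floor_le (mul_nonneg (by positivity) (hμ0 _))
    rw [← Finset.mul_sum, hsum, mul_one] at h2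
    linarith
  have hTlb : ∀ R : ℕ, (R:ℝ)^2 - k ≤ (T R : ℝ) := by
    intro R
    rw [hTeq R]
    push_cast
    have h2 : ∑ i ∈ Finset.range k, ((R:ℝ)^2 * μ (v i) - 1)
        ≤ ∑ i ∈ Finset.range k, ((⌊(R:ℝ)^2 * μ (v i)⌋₊ : ℕ) : ℝ) :=
      Finset.sum_le_sum fun i _ => by
        have := Nat.lt_floor_add_one ((R:ℝ)^2 * μ (v i))
        linarith
    rw [Finset.sum_sub_distrib, ← Finset.mul_sum, hsum, mul_one, Finset.sum_const,
      Finset.card_range, nsmul_eq_mul, mul_one] at h2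
    have h3 : (0:ℝ) ≤ (R:ℝ) * (k*(D+1)) := by positivity
    linarith
  -- the round index at time t
  set Rt : ℕ → ℕ := fun t => Nat.findGreatest (fun R => T R ≤ t) t with hRt
  have hRt1 : ∀ t, T (Rt t) ≤ t := by
    intro t
    exact Nat.findGreatest_spec (P := fun R => T R ≤ t) (Nat.zero_le t)
      (by simpa [hT0] using Nat.zero_le t)
  have hRt2 : ∀ t, t < T (Rt t + 1) := by
    intro t
    rcases lt_or_ge (Rt t) t with h | h
    · exact lt_of_not_ge fun hcon => Nat.findGreatest_is_greatest (Nat.lt_succ_self _) h hcon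
    · have h1 : Rt t = t := le_antisymm (Nat.findGreatest_le t) h
      calc t < t + 1 := Nat.lt_succ_self t
        _ ≤ T (t + 1) := hTR (t+1)
        _ = T (Rt t + 1) := by rw [h1]
  -- main estimate
  rw [Metric.tendsto_atTop]
  intro ε hε
  set C : ℝ := (E:ℝ) + (k:ℝ)*((D:ℝ)+1) + (k:ℝ) + 3 with hC
  set R₀ : ℕ := max (⌈(2*C + 1 + ε*k)/ε⌉₊) (k + 2) with hR₀
  refine ⟨T R₀ + 1, fun t ht => ?_⟩
  have hR₀t : R₀ ≤ t := le_trans (hTR R₀) (by omega)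
  have h8 : R₀ ≤ Rt t := Nat.le_findGreatest hR₀t (by omega)
  set R := Rt t with hRdef
  have hk1 : (1:ℝ) ≤ (k:ℝ) := by exact_mod_cast hk
  have hrk : (k:ℝ) + 2 ≤ (R:ℝ) := by
    have h1 : ((k+2 : ℕ):ℝ) ≤ (R₀:ℝ) := by exact_mod_cast le_max_right _ _
    have h2 : (R₀:ℝ) ≤ (R:ℝ) := by exact_mod_cast h8
    push_cast at h1
    linarith
  have hrC : 2*C + 1 + ε*(k:ℝ) ≤ ε * (R:ℝ) := by
    have h1 : (2*C + 1 + ε*k)/ε ≤ (⌈(2*C + 1 + ε*k)/ε⌉₊ : ℝ) := Nat.le_ceil _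
    have h2 : ((⌈(2*C + 1 + ε*k)/ε⌉₊ : ℕ) : ℝ) ≤ (R₀:ℝ) := by exact_mod_cast le_max_left _ _
    have h2' : (R₀:ℝ) ≤ (R:ℝ) := by exact_mod_cast h8
    have h3 : (2*C + 1 + ε*k)/ε ≤ (R:ℝ) := by linarith
    calc 2*C + 1 + ε*(k:ℝ) = ((2*C + 1 + ε*k)/ε) * ε := by field_simp
      _ ≤ (R:ℝ) * ε := mul_le_mul_of_nonneg_right h3 hε.le
      _ = ε * (R:ℝ) := mul_comm _ _
  -- count and time bounds at time t
  have hm1 : A R ≤ cntN μ v g D k d s t := by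
    have h := cntN_mono (μ:=μ) (v:=v) (g:=g) (D:=D) (k:=k) d s (hRt1 t)
    have h2 : cntN μ v g D k d s (T R) = A R := cntN_tlen hk d s R
    rw [h2] at h
    exact h
  have hm2 : cntN μ v g D k d s t ≤ A (R+1) := by
    have h := cntN_mono (μ:=μ) (v:=v) (g:=g) (D:=D) (k:=k) d s (le_of_lt (hRt2 t))
    have h2 : cntN μ v g D k d s (T (R+1)) = A (R+1) := cntN_tlen hk d s (R+1)
    rw [h2] at h
    exact h
  have e1 : (R:ℝ)^2 * μ s - 1 ≤ ((cntN μ v g D k d s t : ℕ) : ℝ) := by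
    have h1 : (A R : ℝ) ≤ ((cntN μ v g D k d s t : ℕ) : ℝ) := by exact_mod_cast hm1
    have h2 := hAlb R
    linarith
  have e2 : ((cntN μ v g D k d s t : ℕ) : ℝ) ≤ ((R:ℝ)+1)^2 * μ s + ((R:ℝ)+1) * (E:ℝ) := by
    have h1 : ((cntN μ v g D k d s t : ℕ) : ℝ) ≤ (A (R+1) : ℝ) := by exact_mod_cast hm2
    have h2 := hAub (R+1)
    push_cast at h2
    linarith
  have e3 : (R:ℝ)^2 - (k:ℝ) ≤ (t:ℝ) := by
    have h1 : ((T R : ℕ) : ℝ) ≤ (t:ℝ) := by exact_mod_cast hRt1 t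
    have h2 := hTlb R
    linarith
  have e4 : (t:ℝ) + 1 ≤ ((R:ℝ)+1)^2 + ((R:ℝ)+1) * ((k:ℝ)*((D:ℝ)+1)) := by
    have h1 : (t:ℝ) + 1 ≤ ((T (R+1) : ℕ) : ℝ) := by exact_mod_cast hRt2 t
    have h2 := hTub (R+1)
    push_cast at h2
    linarith
  rw [Real.dist_eq, hcast t]
  exact final_bound (μ s) C ε (R:ℝ) (k:ℝ) (E:ℝ) ((k:ℝ)*((D:ℝ)+1))
    ((cntN μ v g D k d s t : ℕ) : ℝ) (t:ℝ) hs hμs1 hk1 (Nat.cast_nonneg _)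
    (by positivity) hC hε hrk hrC e1 e2 e3 e4

end Analysis
end Stmt14Aux


open Stmt14Aux


/-- Theorem 4.7(a), existence form: if the subgraph of `G` induced
on the (nonempty) support of `μ` is connected, then there is a stochastic process
consistent with `G`, taking values in the support of `μ` almost surely at every
time, whose empirical distribution converges almost surely to `μ`. -/
theorem stmt_14 {S : Type*} [Fintype S] [DecidableEq S]
    (G : SimpleGraph S)
    (μ : S → ℝ) (hμ0 : ∀ s, 0 ≤ μ s) (hμ1 : (∑ s, μ s) = 1)
    (hne : {s : S | 0 < μ s}.Nonempty)
    (hconn : (G.induce {s : S | 0 < μ s}).Connected) :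
    ∃ (Ω : Type) (mΩ : MeasurableSpace Ω) (P : Measure Ω),
      IsProbabilityMeasure P ∧
      ∃ X : ℕ → Ω → S,
        (∀ t, @Measurable Ω S mΩ ⊤ (X t)) ∧
        (∀ t : ℕ, ∀ᵐ ω ∂P, X t ω ∈ {s : S | 0 < μ s}) ∧
        (∀ t : ℕ, ∀ᵐ ω ∂P, X (t + 1) ω = X t ω ∨ G.Adj (X t ω) (X (t + 1) ω)) ∧
        (∀ s : S, ∀ᵐ ω ∂P,
          Tendsto (fun t : ℕ =>
              (∑ m ∈ Finset.range t, if X m ω = s then (1 : ℝ) else 0) / t)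
            atTop (nhds (μ s))) := by

  classical
  obtain ⟨s₀, hs₀⟩ := hne
  set lst : List S := (Finset.univ.filter (fun s : S => 0 < μ s)).toList with hlst
  have hmemlst : ∀ s : S, s ∈ lst ↔ 0 < μ s := by
    intro s
    rw [hlst, Finset.mem_toList, Finset.mem_filter]
    simp
  set k : ℕ := lst.length with hk'
  have hk : 0 < k := by
    rw [hk']
    apply List.length_pos_iff.mpr
    intro hnil
    have := (hmemlst s₀).mpr hs₀
    rw [hnil] at this
    simp at this
  set v : ℕ → S := fun i => lst.getD (i % k) s₀ with hv
  have hvmem : ∀ i, v i ∈ lst := by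
    intro i
    have h : i % k < lst.length := by rw [← hk']; exact Nat.mod_lt _ hk
    rw [hv]
    simp only
    rw [List.getD_eq_getElem _ _ h]
    exact List.getElem_mem _
  have hvpos : ∀ i, 0 < μ (v i) := fun i => (hmemlst _).mp (hvmem i)
  have hvV : ∀ i, v i ∈ {s : S | 0 < μ s} := hvpos
  have hreach : ∀ i : ℕ, ∃ w : (G.induce {s : S | 0 < μ s}).Walk
      ⟨v i, hvV i⟩ ⟨v (i+1), hvV (i+1)⟩, True :=
    fun i => ⟨(hconn.preconnected _ _).some, trivial⟩
  choose W hW using hreach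
  set D : ℕ := (Finset.range k).sup (fun j => (W j).length) with hD
  set g : ℕ → ℕ → S := fun i n => ((W (i % k)).getVert n : S) with hg
  have hvmod : ∀ i, v (i % k) = v i := by
    intro i
    rw [hv]
    simp only
    rw [Nat.mod_mod_of_dvd _ dvd_rfl]
  have hg0 : ∀ i, g i 0 = v i := by
    intro i
    rw [hg]
    simp only [SimpleGraph.Walk.getVert_zero]
    exact hvmod i
  have hDle : ∀ i, (W (i % k)).length ≤ D := by
    intro i
    rw [hD]
    exact Finset.le_sup (f := fun j => (W j).length) (Finset.mem_range.mpr (Nat.mod_lt _ hk))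
  have hgD : ∀ i, g i D = v (i+1) := by
    intro i
    rw [hg]
    simp only
    rw [SimpleGraph.Walk.getVert_of_length_le _ (hDle i)]
    show v (i % k + 1) = v (i+1)
    rw [hv]
    simp only
    rw [Nat.mod_add_mod]
  have hstep : ∀ i n, g i (n+1) = g i n ∨ G.Adj (g i n) (g i (n+1)) := by
    intro i n
    rcases lt_or_ge n (W (i % k)).length with h | h
    · right
      have h2 := (W (i % k)).adj_getVert_succ h
      exact h2
    · left
      rw [hg]
      simp only
      rw [SimpleGraph.Walk.getVert_of_length_le _ h,
        SimpleGraph.Walk.getVert_of_length_le _ (le_trans h (Nat.le_succ n))]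
  have hgpos : ∀ i n, 0 < μ (g i n) := by
    intro i n
    exact ((W (i % k)).getVert n).2
  have hvk : v k = v 0 := by
    rw [hv]
    simp [Nat.mod_self]
  have hinj : ∀ i < k, ∀ j < k, v i = v j → i = j := by
    intro i hi j hj hij
    rw [hv] at hij
    simp only at hij
    rw [Nat.mod_eq_of_lt hi, Nat.mod_eq_of_lt hj] at hij
    have hi' : i < lst.length := by rw [← hk']; exact hi
    have hj' : j < lst.length := by rw [← hk']; exact hj
    rw [List.getD_eq_getElem _ _ hi', List.getD_eq_getElem _ _ hj'] at hij
    exact (List.Nodup.getElem_inj_iff (by rw [hlst]; exact Finset.nodup_toList _)).mp hij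
  have hcover : ∀ s, 0 < μ s → ∃ i < k, v i = s := by
    intro s hs
    have hmem : s ∈ lst := (hmemlst s).mpr hs
    have hidx : List.idxOf s lst < lst.length := List.idxOf_lt_length_iff.mpr hmem
    have hidxk : List.idxOf s lst < k := by rw [hk']; exact hidx
    refine ⟨List.idxOf s lst, hidxk, ?_⟩
    rw [hv]
    simp only
    rw [Nat.mod_eq_of_lt hidxk, List.getD_eq_getElem _ _ hidx, List.getElem_idxOf hidx]
  have hsum : ∑ i ∈ Finset.range k, μ (v i) = 1 := by
    have h1 : ∑ i ∈ Finset.range k, μ (v i)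
        = ∑ i ∈ Finset.range lst.length, μ (lst.getD i s₀) := by
      rw [← hk']
      refine Finset.sum_congr rfl fun i hi => ?_
      rw [hv]
      simp only
      rw [Nat.mod_eq_of_lt (Finset.mem_range.mp hi)]
    have h2 := sum_getD lst μ s₀
    have h3 : (lst.map μ).sum = ∑ a ∈ Finset.univ.filter (fun s : S => 0 < μ s), μ a := by
      rw [hlst]
      exact Finset.sum_map_toList _ _
    have h4 : ∑ a ∈ Finset.univ.filter (fun s : S => 0 < μ s), μ a = ∑ a, μ a := by
      refine Finset.sum_filter_of_ne fun x _ hx => ?_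
      exact lt_of_le_of_ne (hμ0 x) (Ne.symm hx)
    rw [h1, h2, h3, h4, hμ1]
  refine ⟨Unit, ⊤, @Measure.dirac Unit ⊤ (), ?_, ?_⟩
  · exact @Measure.dirac.isProbabilityMeasure Unit ⊤ ()
  refine ⟨fun t _ => xseq μ v g D k s₀ t, fun t => measurable_const, ?_, ?_, ?_⟩
  · intro t
    refine Filter.Eventually.of_forall fun ω => ?_
    exact xseq_pos hk hvpos hgpos s₀ t
  · intro t
    refine Filter.Eventually.of_forall fun ω => ?_
    exact xseq_step (Rel := fun a b => b = a ∨ G.Adj a b)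
      (fun a => Or.inl rfl) hg0 hgD hstep hk hvk s₀ t
  · intro s
    refine Filter.Eventually.of_forall fun ω => ?_
    exact tendsto_xseq hμ0 hk hvpos hgpos hsum hinj s₀ s (hcover s)
end

section
/- (Essence of Example 4.5: too-fast convergence destroys the target empirical distribution.) Let S be a finite set with a distinguished element a ∈ S, and let X = (X(t) : t ∈ ℕ) be an S-valued stochastic process on a probability space such that Σ_{t=0}^∞ P(X(t) = a and X(t+1) ≠ a) < ∞. Then almost surely the empirical frequency (1/t)·Σ_{m=0}^{t−1} 1{X(m)=a} converges as t → ∞ to a limit belonging to {0, 1}; in particular, for every α ∈ (0,1), P((1/t)·Σ_{m=0}^{t−1} 1{X(m)=a} → α) = 0. -/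
open MeasureTheory Filter

/-- essence of Example 4.5: if `Σ_t P(X(t) = a ∧ X(t+1) ≠ a) < ∞`,
then almost surely the empirical frequency of `a` converges to a limit in `{0, 1}`;
in particular for every `α ∈ (0,1)` the probability that it converges to `α` is 0. -/
theorem stmt_17 {S : Type*} [DecidableEq S] (a : S)
    (Ω : Type*) (mΩ : MeasurableSpace Ω) (P : Measure Ω)
    (hP : IsProbabilityMeasure P)
    (X : ℕ → Ω → S)
    (hsum : (∑' t : ℕ, P {ω | X t ω = a ∧ X (t + 1) ω ≠ a}) < ⊤) :
    (∀ᵐ ω ∂P,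
        Tendsto (fun t : ℕ =>
            (∑ m ∈ Finset.range t, if X m ω = a then (1 : ℝ) else 0) / t)
          atTop (nhds 0) ∨
        Tendsto (fun t : ℕ =>
            (∑ m ∈ Finset.range t, if X m ω = a then (1 : ℝ) else 0) / t)
          atTop (nhds 1)) ∧
    (∀ α : ℝ, 0 < α → α < 1 →
      P {ω | Tendsto (fun t : ℕ =>
          (∑ m ∈ Finset.range t, if X m ω = a then (1 : ℝ) else 0) / t)
        atTop (nhds α)} = 0) := by
  have hBC : ∀ᵐ ω ∂P, ∀ᶠ t in atTop, ¬ (X t ω = a ∧ X (t + 1) ω ≠ a) := by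
    have := MeasureTheory.measure_setOf_frequently_eq_zero
      (μ := P) (p := fun t ω => X t ω = a ∧ X (t + 1) ω ≠ a) hsum.ne
    rw [MeasureTheory.ae_iff]
    simpa only [Filter.not_eventually, not_not] using this
  have hmain : ∀ᵐ ω ∂P,
      Tendsto (fun t : ℕ =>
          (∑ m ∈ Finset.range t, if X m ω = a then (1 : ℝ) else 0) / t)
        atTop (nhds 0) ∨
      Tendsto (fun t : ℕ =>
          (∑ m ∈ Finset.range t, if X m ω = a then (1 : ℝ) else 0) / t)
        atTop (nhds 1) := by
    filter_upwards [hBC] with ω hω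
    obtain ⟨N, hN⟩ := eventually_atTop.1 hω
    have key : ∀ t, N ≤ t → X t ω = a → X (t + 1) ω = a := by
      intro t ht hta
      by_contra h
      exact hN t ht ⟨hta, h⟩
    have cesaro : ∀ c : ℝ, Tendsto (fun m : ℕ => if X m ω = a then (1 : ℝ) else 0)
        atTop (nhds c) →
        Tendsto (fun t : ℕ =>
            (∑ m ∈ Finset.range t, if X m ω = a then (1 : ℝ) else 0) / t)
          atTop (nhds c) := by
      intro c hc
      have := hc.cesaro
      simpa [div_eq_inv_mul] using this
    by_cases h : ∃ M, N ≤ M ∧ X M ω = a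
    · right
      obtain ⟨M, hM, hMa⟩ := h
      apply cesaro
      have : ∀ t, M ≤ t → X t ω = a := by
        intro t ht
        induction t, ht using Nat.le_induction with
        | base => exact hMa
        | succ n hn ih => exact key n (hM.trans hn) ih
      refine tendsto_nhds_of_eventually_eq ?_
      filter_upwards [eventually_ge_atTop M] with t ht
      simp [this t ht]
    · left
      apply cesaro
      refine tendsto_nhds_of_eventually_eq ?_
      push_neg at h
      filter_upwards [eventually_ge_atTop N] with t ht
      simp [h t ht]
  refine ⟨hmain, fun α hα0 hα1 => ?_⟩
  have hnull : P {ω | ¬ (Tendsto (fun t : ℕ =>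
      (∑ m ∈ Finset.range t, if X m ω = a then (1 : ℝ) else 0) / t) atTop (nhds 0) ∨
      Tendsto (fun t : ℕ =>
      (∑ m ∈ Finset.range t, if X m ω = a then (1 : ℝ) else 0) / t) atTop (nhds 1))} = 0 := by
    exact MeasureTheory.ae_iff.1 hmain
  refine measure_mono_null ?_ hnull
  intro ω hω
  simp only [Set.mem_setOf_eq] at hω ⊢
  rintro (h0 | h1)
  · exact absurd (tendsto_nhds_unique hω h0) hα0.ne'
  · exact absurd (tendsto_nhds_unique hω h1) hα1.ne
end
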